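/- arXiv:2112.14060 — 3 statements merged into one kernel-verified Lean document; each statement's English description precedes it below -/
import Mathlib

section
/- For all nonnegative integers n and k, the k-th derivative of the Chebyshev polynomial T_n at the endpoints ±1 satisfies T_n^{(k)}(±1) = (±1)^{n+k} · ∏_{j=0}^{k-1} (n² − j²)/(2j+1). -/
open Polynomial

/-! `T_n` has the parity of `n`, so `T_n^{(k)}` has the parity of `n + k` and its value at `-1` is
`(-1)^(n+k)` times its value at `1`. The latter comes from differentiating the Chebyshev equation
`(1 - x²) T_n'' - x T_n' + n² T_n = 0` `k` times and evaluating at `x = 1`, which gives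
`(2k + 1) T_n^{(k+1)}(1) = (n² - k²) T_n^{(k)}(1)` (see `Chebyshev.iterate_derivative_T_eval_one_eq_div`). -/

namespace Polynomial

theorem iterate_derivative_comp_neg_X {R : Type*} [CommRing R] (p : R[X]) (k : ℕ) :
    derivative^[k] (p.comp (-X)) = (-1) ^ k * (derivative^[k] p).comp (-X) := by
  induction k generalizing p with
  | zero => simp
  | succ k ih => simp [ih (derivative p), derivative_comp, pow_succ]

namespace Chebyshev

variable {R : Type*} [CommRing R]

theorem T_comp_neg_X (n : ℤ) : (T R n).comp (-X) = (n.negOnePow : R[X]) * T R n := by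
  induction n using Chebyshev.induct' with
  | zero => simp
  | one => simp
  | add_two n ih1 ih2 =>
    simp only [T_add_two, sub_comp, mul_comp, ofNat_comp, X_comp, ih1, ih2, Int.negOnePow_add,
      Int.negOnePow_one, Int.negOnePow_even 2 even_two]
    push_cast
    ring
  | neg n ih => simp [ih]

theorem iterate_derivative_T_eval_neg_one (n : ℤ) (k : ℕ) :
    (derivative^[k] (T R n)).eval (-1) =
      (-1) ^ k * (n.negOnePow : R) * (derivative^[k] (T R n)).eval 1 := by
  have h := congrArg (eval 1) (iterate_derivative_comp_neg_X (T R n) k)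
  rw [T_comp_neg_X] at h
  simp only [iterate_derivative_intCast_mul, eval_mul, eval_intCast, eval_pow, eval_neg, eval_one,
    eval_comp, eval_X] at h
  have hsq : ((-1 : R) ^ k) ^ 2 = 1 := by rw [← pow_mul, mul_comm, pow_mul, neg_one_sq, one_pow]
  linear_combination -(-1 : R) ^ k * h - (derivative^[k] (T R n)).eval (-1) * hsq

end Chebyshev

end Polynomial

/-- Derivatives of Chebyshev polynomials at the endpoints:
`T_n^{(k)}(±1) = (±1)^{n+k} ∏_{j=0}^{k-1} (n² − j²)/(2j+1)`. -/
theorem chebyshev_deriv_at_endpoints (n k : ℕ) :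
    ((Polynomial.derivative^[k] (Chebyshev.T ℝ n)).eval (1 : ℝ) =
        ∏ j ∈ Finset.range k, ((n : ℝ) ^ 2 - (j : ℝ) ^ 2) / (2 * (j : ℝ) + 1)) ∧
    ((Polynomial.derivative^[k] (Chebyshev.T ℝ n)).eval (-1 : ℝ) =
        (-1 : ℝ) ^ (n + k) *
          ∏ j ∈ Finset.range k, ((n : ℝ) ^ 2 - (j : ℝ) ^ 2) / (2 * (j : ℝ) + 1)) := by
  have at_one : (derivative^[k] (Chebyshev.T ℝ n)).eval 1 =
      ∏ j ∈ Finset.range k, ((n : ℝ) ^ 2 - (j : ℝ) ^ 2) / (2 * (j : ℝ) + 1) := by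
    rw [Chebyshev.iterate_derivative_T_eval_one_eq_div, Finset.prod_div_distrib]
    push_cast
    rfl
  refine ⟨at_one, ?_⟩
  rw [Chebyshev.iterate_derivative_T_eval_neg_one, at_one, Int.cast_negOnePow_natCast, pow_add]
  ring
end

section
/- Let f be a function on [-1,1] whose Chebyshev coefficients satisfy |a_j| ≤ 2M ρ^{-j} for all j ≥ 0, for some ρ > 1 and M > 0. If an n-point quadrature rule with nonnegative weights w_k summing to K is exact for all polynomials of degree ≤ 2n−1 against a nonnegative weight function w with ∫_{-1}^1 w = K, and f(x) = ∑_{j=0}^∞ a_j T_j(x) converges uniformly, then the quadrature error satisfies |∫_{-1}^1 f(x)w(x)dx − ∑_k w_k f(x_k)| ≤ 4 K M / (ρ^{2n} (1 − ρ^{-1})). -/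
/-!
The quadrature error `E` is linear, vanishes on `T_j` for `j < 2n` by exactness, and satisfies
`|E g| ≤ 2K sup |g|` on `[-1, 1]` because both the weight function and the weights are
nonnegative with total mass `K`. Since `|T_j| ≤ 1` there, the error of the `N`-th Chebyshev
partial sum is at most `∑_{j ≥ 2n} 2Mρ^{-j} · 2K`, a geometric tail; the same sup-norm bound lets
the estimate pass to the uniform limit `f`.
-/

open Polynomial intervalIntegral Filter

open MeasureTheory Set Topology

theorem abs_integral_mul_le_of_abs_le {a b c : ℝ} {g w : ℝ → ℝ} (hab : a ≤ b)
    (hw : IntervalIntegrable w volume a b) (hw0 : ∀ t ∈ Icc a b, 0 ≤ w t)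
    (hg : ∀ t ∈ Icc a b, |g t| ≤ c) :
    |∫ t in a..b, g t * w t| ≤ c * ∫ t in a..b, w t := by
  rw [← Real.norm_eq_abs, ← intervalIntegral.integral_const_mul]
  refine norm_integral_le_of_norm_le hab (ae_of_all _ fun t ht => ?_) (hw.const_mul c)
  have ht' := Ioc_subset_Icc_self ht
  rw [Real.norm_eq_abs, abs_mul, abs_of_nonneg (hw0 t ht')]
  exact mul_le_mul_of_nonneg_right (hg t ht') (hw0 t ht')

theorem abs_sum_mul_le_of_abs_le {ι : Type*} (s : Finset ι) {c : ℝ} {W y : ι → ℝ}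
    (hW0 : ∀ k ∈ s, 0 ≤ W k) (hy : ∀ k ∈ s, |y k| ≤ c) :
    |∑ k ∈ s, W k * y k| ≤ c * ∑ k ∈ s, W k := by
  rw [Finset.mul_sum]
  refine (Finset.abs_sum_le_sum_abs _ _).trans (Finset.sum_le_sum fun k hk => ?_)
  rw [abs_mul, abs_of_nonneg (hW0 k hk), mul_comm]
  exact mul_le_mul_of_nonneg_right (hy k hk) (hW0 k hk)

theorem abs_sum_range_le_of_geometric_tail {e : ℕ → ℝ} {C r : ℝ} {m N : ℕ} (hr0 : 0 ≤ r)
    (hr1 : r < 1) (hmN : m ≤ N) (hzero : ∀ j < m, e j = 0) (he : ∀ j, |e j| ≤ C * r ^ j) :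
    |∑ j ∈ Finset.range N, e j| ≤ C * (r ^ m / (1 - r)) := by
  have hC : 0 ≤ C := (abs_nonneg _).trans (by simpa using he 0)
  rw [← Finset.sum_range_add_sum_Ico _ hmN,
    Finset.sum_eq_zero fun j hj => hzero j (Finset.mem_range.1 hj), zero_add]
  calc |∑ j ∈ Finset.Ico m N, e j| ≤ ∑ j ∈ Finset.Ico m N, |e j| := Finset.abs_sum_le_sum_abs _ _
    _ ≤ ∑ j ∈ Finset.Ico m N, C * r ^ j := Finset.sum_le_sum fun j _ => he j
    _ = C * ∑ j ∈ Finset.Ico m N, r ^ j := (Finset.mul_sum _ _ _).symm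
    _ ≤ C * (r ^ m / (1 - r)) :=
      mul_le_mul_of_nonneg_left (geom_sum_Ico_le_of_lt_one hr0 hr1) hC

section QuadratureError

noncomputable def quadError {ι : Type*} [Fintype ι] (a b : ℝ) (w : ℝ → ℝ) (x W : ι → ℝ)
    (g : ℝ → ℝ) : ℝ :=
  (∫ t in a..b, g t * w t) - ∑ k, W k * g (x k)

variable {ι : Type*} [Fintype ι] {a b : ℝ} {w : ℝ → ℝ} {x W : ι → ℝ}

theorem abs_quadError_le {g : ℝ → ℝ} {c : ℝ} (hab : a ≤ b)
    (hw : IntervalIntegrable w volume a b) (hw0 : ∀ t ∈ Icc a b, 0 ≤ w t) (hW0 : ∀ k, 0 ≤ W k)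
    (hx : ∀ k, x k ∈ Icc a b) (hg : ∀ t ∈ Icc a b, |g t| ≤ c) :
    |quadError a b w x W g| ≤ c * ((∫ t in a..b, w t) + ∑ k, W k) := by
  rw [mul_add]
  exact (abs_sub _ _).trans <| add_le_add (abs_integral_mul_le_of_abs_le hab hw hw0 hg)
    (abs_sum_mul_le_of_abs_le _ (fun k _ => hW0 k) fun k _ => hg (x k) (hx k))

theorem quadError_sub {f g : ℝ → ℝ} (hf : IntervalIntegrable (fun t => f t * w t) volume a b)
    (hg : IntervalIntegrable (fun t => g t * w t) volume a b) :
    quadError a b w x W (f - g) = quadError a b w x W f - quadError a b w x W g := by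
  simp only [quadError, Pi.sub_apply, sub_mul, mul_sub, integral_sub hf hg,
    Finset.sum_sub_distrib]
  ring

theorem quadError_sum_mul {κ : Type*} (s : Finset κ) (c : κ → ℝ) (p : κ → ℝ → ℝ)
    (hp : ∀ j ∈ s, IntervalIntegrable (fun t => p j t * w t) volume a b) :
    quadError a b w x W (fun t => ∑ j ∈ s, c j * p j t) =
      ∑ j ∈ s, c j * quadError a b w x W (p j) := by
  have hint : ∫ t in a..b, (∑ j ∈ s, c j * p j t) * w t =
      ∑ j ∈ s, c j * ∫ t in a..b, p j t * w t := by
    simp only [Finset.sum_mul, mul_assoc]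
    rw [integral_finsetSum fun j hj => (hp j hj).const_mul (c j)]
    exact Finset.sum_congr rfl fun j _ => intervalIntegral.integral_const_mul _ _
  have hsum : ∑ k, W k * ∑ j ∈ s, c j * p j (x k) = ∑ j ∈ s, c j * ∑ k, W k * p j (x k) := by
    simp only [Finset.mul_sum]
    rw [Finset.sum_comm]
    exact Finset.sum_congr rfl fun j _ => Finset.sum_congr rfl fun k _ => by ring
  simp only [quadError, hint, hsum, mul_sub, Finset.sum_sub_distrib]

theorem quadError_eval_eq_zero_of_natDegree_le {d : ℕ}
    (hexact : ∀ p : ℝ[X], p.natDegree ≤ d →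
      ∑ k, W k * p.eval (x k) = ∫ t in a..b, p.eval t * w t)
    {p : ℝ[X]} (hp : p.natDegree ≤ d) :
    quadError a b w x W (fun t => p.eval t) = 0 :=
  sub_eq_zero.2 (hexact p hp).symm

theorem tendsto_quadError_of_tendstoUniformlyOn {κ : Type*} {l : Filter κ} [l.NeBot]
    {F : κ → ℝ → ℝ} {f : ℝ → ℝ} (hab : a ≤ b) (hw : IntervalIntegrable w volume a b)
    (hw0 : ∀ t ∈ Icc a b, 0 ≤ w t) (hW0 : ∀ k, 0 ≤ W k) (hx : ∀ k, x k ∈ Icc a b)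
    (hF : ∀ N, ContinuousOn (F N) (Icc a b)) (hFf : TendstoUniformlyOn F f l (Icc a b)) :
    Tendsto (fun N => quadError a b w x W (F N)) l (𝓝 (quadError a b w x W f)) := by
  have hf : ContinuousOn f (Icc a b) := hFf.continuousOn (Frequently.of_forall hF)
  rw [← uIcc_of_le hab] at hF hf
  set C := (∫ t in a..b, w t) + ∑ k, W k
  have hC : 0 ≤ C :=
    add_nonneg (intervalIntegral.integral_nonneg hab hw0) (Finset.sum_nonneg fun k _ => hW0 k)
  refine Metric.tendsto_nhds.2 fun ε hε => ?_
  filter_upwards [Metric.tendstoUniformlyOn_iff.1 hFf (ε / (C + 1)) (by positivity)] with N hN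
  rw [Real.dist_eq, ← quadError_sub (hw.continuousOn_mul (hF N)) (hw.continuousOn_mul hf)]
  calc |quadError a b w x W (F N - f)| ≤ ε / (C + 1) * C :=
        abs_quadError_le hab hw hw0 hW0 hx fun t ht => by
          rw [Pi.sub_apply, abs_sub_comm]
          exact (hN t ht).le
    _ < ε := by
      rw [div_mul_eq_mul_div, div_lt_iff₀ (by positivity)]
      nlinarith

theorem abs_quadError_eval_T_le (hw : IntervalIntegrable w volume (-1) 1)
    (hw0 : ∀ t ∈ Icc (-1 : ℝ) 1, 0 ≤ w t) (hW0 : ∀ k, 0 ≤ W k) (hx : ∀ k, x k ∈ Icc (-1 : ℝ) 1)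
    (j : ℤ) :
    |quadError (-1) 1 w x W (fun t => (Chebyshev.T ℝ j).eval t)| ≤
      (∫ t in (-1 : ℝ)..1, w t) + ∑ k, W k := by
  simpa using abs_quadError_le (c := 1) (by norm_num) hw hw0 hW0 hx
    fun t ht => Chebyshev.abs_eval_T_real_le_one j (abs_le.2 ht)

end QuadratureError

theorem gauss_quadrature_error_analytic_general (n : ℕ)
    (f : ℝ → ℝ) (a : ℕ → ℝ) (M ρ : ℝ) (hρ : 1 < ρ)
    (hcoef : ∀ j : ℕ, |a j| ≤ 2 * M * ρ ^ (-(j : ℤ)))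
    (hunif : TendstoUniformlyOn
      (fun N x => ∑ j ∈ Finset.range N, a j * (Chebyshev.T ℝ j).eval x) f
      atTop (Set.Icc (-1 : ℝ) 1))
    (w : ℝ → ℝ) (hw : IntervalIntegrable w MeasureTheory.volume (-1) 1)
    (hwnonneg : ∀ x ∈ Set.Icc (-1 : ℝ) 1, 0 ≤ w x)
    (K : ℝ) (hK : K = ∫ x in (-1 : ℝ)..1, w x)
    (x : Fin n → ℝ) (hx : ∀ k, x k ∈ Set.Icc (-1 : ℝ) 1)
    (W : Fin n → ℝ) (hWnonneg : ∀ k, 0 ≤ W k) (hWsum : ∑ k, W k = K)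
    (hexact : ∀ p : Polynomial ℝ, p.natDegree ≤ 2 * n - 1 →
      ∑ k, W k * p.eval (x k) = ∫ t in (-1 : ℝ)..1, p.eval t * w t) :
    |(∫ t in (-1 : ℝ)..1, f t * w t) - ∑ k, W k * f (x k)| ≤
      4 * K * M / (ρ ^ (2 * n) * (1 - ρ⁻¹)) := by
  set E := quadError (-1) 1 w x W
  set T : ℕ → ℝ → ℝ := fun j t => (Chebyshev.T ℝ j).eval t
  have hab : (-1 : ℝ) ≤ 1 := by norm_num
  have hT_zero : ∀ j < 2 * n, E (T j) = 0 := fun j hj =>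
    quadError_eval_eq_zero_of_natDegree_le hexact (by rw [Chebyshev.natDegree_T]; omega)
  have hT_le : ∀ j, |E (T j)| ≤ 2 * K := fun j => by
    simpa [← hK, hWsum, two_mul] using abs_quadError_eval_T_le hw hwnonneg hWnonneg hx j
  have hpartial : ∀ N ≥ 2 * n, |E (fun t => ∑ j ∈ Finset.range N, a j * T j t)| ≤
      4 * K * M * (ρ⁻¹ ^ (2 * n) / (1 - ρ⁻¹)) := fun N hN => by
    have hsplit : E (fun t => ∑ j ∈ Finset.range N, a j * T j t) =
        ∑ j ∈ Finset.range N, a j * E (T j) :=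
      quadError_sum_mul _ _ _ fun j _ => hw.continuousOn_mul (Chebyshev.T ℝ j).continuousOn
    rw [hsplit]
    refine abs_sum_range_le_of_geometric_tail (by positivity) (inv_lt_one_of_one_lt₀ hρ) hN
      (fun j hj => by rw [hT_zero j hj, mul_zero]) fun j => ?_
    have ha : |a j| ≤ 2 * M * ρ⁻¹ ^ j := by simpa [zpow_neg, inv_pow] using hcoef j
    rw [abs_mul]
    calc |a j| * |E (T j)| ≤ 2 * M * ρ⁻¹ ^ j * (2 * K) :=
          mul_le_mul ha (hT_le j) (abs_nonneg _) ((abs_nonneg _).trans ha)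
      _ = 4 * K * M * ρ⁻¹ ^ j := by ring
  have hlim := (tendsto_quadError_of_tendstoUniformlyOn
    (F := fun N t => ∑ j ∈ Finset.range N, a j * T j t) hab hw hwnonneg hWnonneg hx
    (fun N => by fun_prop) hunif).abs
  calc |E f| ≤ 4 * K * M * (ρ⁻¹ ^ (2 * n) / (1 - ρ⁻¹)) :=
        le_of_tendsto hlim (eventually_atTop.2 ⟨2 * n, hpartial⟩)
    _ = 4 * K * M / (ρ ^ (2 * n) * (1 - ρ⁻¹)) := by
      rw [inv_pow, div_eq_mul_inv, div_eq_mul_inv, mul_inv]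

theorem gauss_quadrature_error_analytic (n : ℕ) (hn : 1 ≤ n)
    (f : ℝ → ℝ) (a : ℕ → ℝ) (M ρ : ℝ) (hρ : 1 < ρ) (hM : 0 < M)
    (hcoef : ∀ j : ℕ, |a j| ≤ 2 * M * ρ ^ (-(j : ℤ)))
    (hunif : TendstoUniformlyOn
      (fun N x => ∑ j ∈ Finset.range N, a j * (Chebyshev.T ℝ j).eval x) f
      atTop (Set.Icc (-1 : ℝ) 1))
    (w : ℝ → ℝ) (hw : IntervalIntegrable w MeasureTheory.volume (-1) 1)
    (hwnonneg : ∀ x ∈ Set.Icc (-1 : ℝ) 1, 0 ≤ w x)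
    (K : ℝ) (hK : K = ∫ x in (-1 : ℝ)..1, w x)
    (x : Fin n → ℝ) (hx : ∀ k, x k ∈ Set.Icc (-1 : ℝ) 1)
    (W : Fin n → ℝ) (hWnonneg : ∀ k, 0 ≤ W k) (hWsum : ∑ k, W k = K)
    (hexact : ∀ p : Polynomial ℝ, p.natDegree ≤ 2 * n - 1 →
      ∑ k, W k * p.eval (x k) = ∫ t in (-1 : ℝ)..1, p.eval t * w t) :
    |(∫ t in (-1 : ℝ)..1, f t * w t) - ∑ k, W k * f (x k)| ≤
      4 * K * M / (ρ ^ (2 * n) * (1 - ρ⁻¹)) :=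
  gauss_quadrature_error_analytic_general n f a M ρ hρ hcoef hunif w hw hwnonneg K hK x hx W
    hWnonneg hWsum hexact
end

section
/- If f is analytic in an open set containing the Bernstein ellipse E_ρ (with foci ±1 and semiaxis sum ρ > 1) with |f(z)| ≤ M on E_ρ, then its Chebyshev coefficients a_j = (2/π)∫_{-1}^1 f(x)T_j(x)/√(1−x²) dx satisfy |a_j| ≤ 2M ρ^{-j} for all j ≥ 1 and |a_0| ≤ 2M. -/
open Polynomial intervalIntegral Complex

/-!
Substituting `x = cos θ` turns the Chebyshev coefficient into the Fourier coefficient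
`(2/π) ∫₀^π f(cos θ) cos(jθ) dθ`, and since `cos θ = (z + z⁻¹)/2` for `z = e^{iθ}`, this is
`(π i)⁻¹ ∮_{|z|=1} f((z + z⁻¹)/2) z^{-j-1} dz`. The Joukowsky map sends the annulus
`1 ≤ |z| ≤ ρ` onto the region bounded by `E_ρ`, where the integrand is holomorphic, so by
Cauchy's theorem the circle can be pushed out to `|z| = ρ`; there the integrand is at most
`M ρ^{-j-1}`, giving `|a_j| ≤ π⁻¹ · 2πρ · M ρ^{-j-1} = 2M ρ^{-j}`.
-/

noncomputable def joukowsky (z : ℂ) : ℂ := (z + z⁻¹) / 2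

theorem joukowsky_exp_mul_I (θ : ℂ) : joukowsky (exp (θ * I)) = cos θ := by
  rw [joukowsky, cos.eq_def, neg_mul, exp_neg]

theorem differentiableAt_joukowsky {z : ℂ} (hz : z ≠ 0) : DifferentiableAt ℂ joukowsky z :=
  (differentiableAt_id.add (differentiableAt_inv hz)).div_const 2

theorem exists_norm_eq_one_joukowsky_eq {x : ℝ} (hx : x ∈ Set.Icc (-1) 1) :
    ∃ z : ℂ, ‖z‖ = 1 ∧ joukowsky z = x :=
  ⟨exp (Real.arccos x * I), norm_exp_ofReal_mul_I _, by
    rw [joukowsky_exp_mul_I, ← ofReal_cos, Real.cos_arccos hx.1 hx.2]⟩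

theorem integral_inv_sqrt_one_sub_sq_smul_eq_integral_cos {E : Type*} [NormedAddCommGroup E]
    [NormedSpace ℝ E] (g : ℝ → E) :
    ∫ x in (-1 : ℝ)..1, (√(1 - x ^ 2))⁻¹ • g x = ∫ θ in (0 : ℝ)..Real.pi, g (Real.cos θ) := by
  have himage : Real.cos '' Set.Icc 0 Real.pi = Set.Icc (-1) 1 :=
    (Set.mapsTo_iff_image_subset.mp fun θ _ => Real.cos_mem_Icc θ).antisymm Real.surjOn_cos
  rw [integral_of_le (by norm_num), ← MeasureTheory.integral_Icc_eq_integral_Ioc, ← himage,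
    MeasureTheory.integral_image_eq_integral_abs_deriv_smul measurableSet_Icc
      (fun θ _ => (Real.hasDerivAt_cos θ).hasDerivWithinAt) Real.injOn_cos,
    integral_of_le Real.pi_pos.le, ← MeasureTheory.integral_Icc_eq_integral_Ioc,
    MeasureTheory.integral_Icc_eq_integral_Ioo, MeasureTheory.integral_Icc_eq_integral_Ioo]
  refine MeasureTheory.setIntegral_congr_fun measurableSet_Ioo fun θ ⟨h0, hπ⟩ => ?_
  have hsin : 0 < Real.sin θ := Real.sin_pos_of_pos_of_lt_pi h0 hπ
  have hsqrt : √(1 - Real.cos θ ^ 2) = Real.sin θ := by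
    rw [← Real.sin_sq, Real.sqrt_sq hsin.le]
  rw [hsqrt, abs_neg, abs_of_pos hsin, smul_smul, mul_inv_cancel₀ hsin.ne', one_smul]

theorem integral_eval_chebyshevT_div_sqrt_eq_integral_cos (g : ℝ → ℂ) (n : ℤ) :
    ∫ x in (-1 : ℝ)..1, g x * (Chebyshev.T ℂ n).eval (x : ℂ) / Real.sqrt (1 - x ^ 2) =
      ∫ θ in (0 : ℝ)..Real.pi, g (Real.cos θ) * cos (n * θ) := by
  calc _ = ∫ x in (-1 : ℝ)..1, (√(1 - x ^ 2))⁻¹ • (g x * (Chebyshev.T ℂ n).eval (x : ℂ)) :=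
        integral_congr fun x _ => by rw [real_smul, ofReal_inv, div_eq_inv_mul]
    _ = ∫ θ in (0 : ℝ)..Real.pi, g (Real.cos θ) * (Chebyshev.T ℂ n).eval (Real.cos θ : ℂ) :=
        integral_inv_sqrt_one_sub_sq_smul_eq_integral_cos _
    _ = _ := by simp only [ofReal_cos, Chebyshev.T_complex_cos]

theorem integral_comp_cos_mul_exp_eq (g : ℝ → ℂ) (hg : ContinuousOn g (Set.Icc (-1) 1)) (n : ℤ) :
    ∫ θ in (0 : ℝ)..2 * Real.pi, g (Real.cos θ) * exp (-(n * θ * I)) =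
      2 * ∫ θ in (0 : ℝ)..Real.pi, g (Real.cos θ) * cos (n * θ) := by
  set h : ℝ → ℂ := fun θ => g (Real.cos θ) * exp (-(n * θ * I))
  have hh : Continuous h :=
    (hg.comp_continuous Real.continuous_cos Real.cos_mem_Icc).mul (by fun_prop)
  have hsymm : ∀ θ : ℝ, h θ + h (2 * Real.pi - θ) = 2 * (g (Real.cos θ) * cos (n * θ)) := by
    intro θ
    have hperiod : exp (-(n * (2 * Real.pi - θ : ℝ) * I)) = exp (n * θ * I) := by
      rw [← mul_one (exp (n * θ * I)), ← exp_int_mul_two_pi_mul_I (-n), ← exp_add]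
      push_cast
      ring_nf
    have hcos := two_cos (n * θ)
    rw [neg_mul] at hcos
    simp only [h, Real.cos_two_pi_sub, hperiod]
    linear_combination -g (Real.cos θ) * hcos
  calc ∫ θ in (0 : ℝ)..2 * Real.pi, h θ
      = (∫ θ in (0 : ℝ)..Real.pi, h θ) + ∫ θ in Real.pi..2 * Real.pi, h θ :=
        (integral_add_adjacent_intervals (hh.intervalIntegrable _ _)
          (hh.intervalIntegrable _ _)).symm
    _ = (∫ θ in (0 : ℝ)..Real.pi, h θ) + ∫ θ in (0 : ℝ)..Real.pi, h (2 * Real.pi - θ) := by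
        rw [integral_comp_sub_left h (2 * Real.pi), sub_zero, two_mul, add_sub_cancel_right]
    _ = ∫ θ in (0 : ℝ)..Real.pi, (h θ + h (2 * Real.pi - θ)) :=
        (integral_add (hh.intervalIntegrable _ _)
          ((hh.comp (continuous_sub_left _)).intervalIntegrable _ _)).symm
    _ = _ := by simp only [hsymm, integral_const_mul]

theorem circleIntegral_comp_joukowsky_mul_zpow (f : ℂ → ℂ) (n : ℤ) :
    (∮ z in C(0, 1), f (joukowsky z) * z ^ (-n - 1)) =
      I * ∫ θ in (0 : ℝ)..2 * Real.pi, f (Real.cos θ) * exp (-(n * θ * I)) := by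
  rw [circleIntegral, ← integral_const_mul]
  refine integral_congr fun θ _ => ?_
  have hexp : exp (θ * I) * exp (θ * I) ^ (-n - 1) = exp (-(n * θ * I)) := by
    rw [← exp_int_mul, ← exp_add]
    push_cast
    ring_nf
  simp only [deriv_circleMap, circleMap_zero, ofReal_one, one_mul, joukowsky_exp_mul_I,
    ← ofReal_cos, smul_eq_mul]
  linear_combination I * f (Real.cos θ) * hexp

theorem integral_eval_chebyshevT_div_sqrt_eq_circleIntegral (f : ℂ → ℂ)
    (hf : ContinuousOn (fun x : ℝ => f x) (Set.Icc (-1) 1)) (n : ℤ) :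
    ∫ x in (-1 : ℝ)..1, f x * (Chebyshev.T ℂ n).eval (x : ℂ) / Real.sqrt (1 - x ^ 2) =
      (2 * I)⁻¹ * ∮ z in C(0, 1), f (joukowsky z) * z ^ (-n - 1) := by
  rw [integral_eval_chebyshevT_div_sqrt_eq_integral_cos, circleIntegral_comp_joukowsky_mul_zpow,
    integral_comp_cos_mul_exp_eq _ hf]
  field_simp

theorem circleIntegral_comp_joukowsky_mul_zpow_eq {f : ℂ → ℂ} {r R : ℝ} (hr : 0 < r)
    (hrR : r ≤ R) (hf : ∀ z : ℂ, r ≤ ‖z‖ → ‖z‖ ≤ R → DifferentiableAt ℂ f (joukowsky z))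
    (n : ℤ) :
    (∮ z in C(0, r), f (joukowsky z) * z ^ (-n - 1)) =
      ∮ z in C(0, R), f (joukowsky z) * z ^ (-n - 1) := by
  have hF : ∀ z : ℂ, r ≤ ‖z‖ → ‖z‖ ≤ R →
      DifferentiableAt ℂ (fun z => f (joukowsky z) * z ^ (-n - 1)) z := fun z hrz hzR =>
    have hz : z ≠ 0 := norm_pos_iff.mp (hr.trans_le hrz)
    ((hf z hrz hzR).comp z (differentiableAt_joukowsky hz)).mul
      (differentiableAt_zpow.mpr (Or.inl hz))
  refine (circleIntegral_eq_of_differentiable_on_annulus_off_countable hr hrR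
    Set.countable_empty (fun z ⟨hzR, hrz⟩ => ?_) fun z ⟨⟨hzR, hrz⟩, _⟩ => ?_).symm
  · simp only [Metric.mem_closedBall, Metric.mem_ball, dist_zero_right, not_lt] at hzR hrz
    exact (hF z hrz hzR).continuousAt.continuousWithinAt
  · simp only [Metric.mem_closedBall, Metric.mem_ball, dist_zero_right, not_le] at hzR hrz
    exact hF z hrz.le hzR.le

theorem norm_circleIntegral_comp_joukowsky_mul_zpow_le {f : ℂ → ℂ} {R M : ℝ} (hR : 0 < R)
    (hf : ∀ z : ℂ, ‖z‖ = R → ‖f (joukowsky z)‖ ≤ M) (n : ℤ) :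
    ‖∮ z in C(0, R), f (joukowsky z) * z ^ (-n - 1)‖ ≤ 2 * Real.pi * M * R ^ (-n) := by
  calc ‖∮ z in C(0, R), f (joukowsky z) * z ^ (-n - 1)‖
      ≤ 2 * Real.pi * R * (M * R ^ (-n - 1)) :=
        circleIntegral.norm_integral_le_of_norm_le_const hR.le fun z hz => by
          rw [mem_sphere_zero_iff_norm] at hz
          rw [norm_mul, norm_zpow, hz]
          exact mul_le_mul_of_nonneg_right (hf z hz) (by positivity)
    _ = 2 * Real.pi * M * R ^ (-n) := by
        rw [zpow_sub_one₀ hR.ne']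
        field_simp

theorem chebyshev_coeff_bound_analytic_general (f : ℂ → ℂ) (ρ M : ℝ) (hρ : 1 < ρ)
    (E : Set ℂ) (hE : E = {w : ℂ | ∃ z : ℂ, 1 ≤ ‖z‖ ∧ ‖z‖ ≤ ρ ∧
      w = (z + z⁻¹) / 2})
    (U : Set ℂ) (hEU : E ⊆ U)
    (hf : AnalyticOnNhd ℂ f U)
    (hbound : ∀ z ∈ E, ‖f z‖ ≤ M)
    (a : ℕ → ℂ)
    (ha : ∀ j, a j = (2 / Real.pi : ℂ) *
      ∫ x in (-1 : ℝ)..1, f x * ((Chebyshev.T ℂ j).eval (x : ℂ)) / Real.sqrt (1 - x ^ 2)) :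
    (∀ j : ℕ, 1 ≤ j → ‖a j‖ ≤ 2 * M * ρ ^ (-(j : ℤ))) ∧
      ‖a 0‖ ≤ 2 * M := by
  have hmem : ∀ z : ℂ, 1 ≤ ‖z‖ → ‖z‖ ≤ ρ → joukowsky z ∈ E := fun z h1 h2 => by
    subst hE
    exact ⟨z, h1, h2, rfl⟩
  have hdiff : ∀ z : ℂ, 1 ≤ ‖z‖ → ‖z‖ ≤ ρ → DifferentiableAt ℂ f (joukowsky z) :=
    fun z h1 h2 => (hf _ (hEU (hmem z h1 h2))).differentiableAt
  have hcont : ContinuousOn (fun x : ℝ => f x) (Set.Icc (-1) 1) := fun x hx => by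
    obtain ⟨z, hz, hzx⟩ := exists_norm_eq_one_joukowsky_eq hx
    have hfx := (hdiff z hz.ge (hz.trans_lt hρ).le).continuousAt
    rw [hzx] at hfx
    exact (hfx.comp continuous_ofReal.continuousAt).continuousWithinAt
  suffices h : ∀ j : ℕ, ‖a j‖ ≤ 2 * M * ρ ^ (-(j : ℤ)) from
    ⟨fun j _ => h j, by simpa using h 0⟩
  intro j
  rw [ha, integral_eval_chebyshevT_div_sqrt_eq_circleIntegral f hcont,
    circleIntegral_comp_joukowsky_mul_zpow_eq one_pos hρ.le hdiff]
  have hnorm : ‖(2 / Real.pi : ℂ) * (2 * I)⁻¹‖ = Real.pi⁻¹ := by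
    simp only [norm_mul, norm_inv, norm_div, norm_I, norm_real, Complex.norm_ofNat,
      Real.norm_of_nonneg Real.pi_pos.le]
    ring
  calc _ = Real.pi⁻¹ * ‖∮ z in C(0, ρ), f (joukowsky z) * z ^ (-(j : ℤ) - 1)‖ := by
        rw [← mul_assoc, norm_mul, hnorm]
    _ ≤ Real.pi⁻¹ * (2 * Real.pi * M * ρ ^ (-(j : ℤ))) := by
        gcongr
        exact norm_circleIntegral_comp_joukowsky_mul_zpow_le (one_pos.trans hρ)
          (fun z hz => hbound _ (hmem z (hz ▸ hρ.le) hz.le)) _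
    _ = 2 * M * ρ ^ (-(j : ℤ)) := by
        field_simp

theorem chebyshev_coeff_bound_analytic (f : ℂ → ℂ) (ρ M : ℝ) (hρ : 1 < ρ) (hM : 0 < M)
    (E : Set ℂ) (hE : E = {w : ℂ | ∃ z : ℂ, 1 ≤ ‖z‖ ∧ ‖z‖ ≤ ρ ∧
      w = (z + z⁻¹) / 2})
    (U : Set ℂ) (hU : IsOpen U) (hEU : E ⊆ U)
    (hf : AnalyticOnNhd ℂ f U)
    (hbound : ∀ z ∈ E, ‖f z‖ ≤ M)
    (a : ℕ → ℂ)
    (ha : ∀ j, a j = (2 / Real.pi : ℂ) *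
      ∫ x in (-1 : ℝ)..1, f x * ((Chebyshev.T ℂ j).eval (x : ℂ)) / Real.sqrt (1 - x ^ 2)) :
    (∀ j : ℕ, 1 ≤ j → ‖a j‖ ≤ 2 * M * ρ ^ (-(j : ℤ))) ∧
      ‖a 0‖ ≤ 2 * M :=
  chebyshev_coeff_bound_analytic_general f ρ M hρ E hE U hEU hf hbound a ha
end
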